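/- Let N ≥ 4 be an integer and let 1 ≤ j ≤ N−3. Let s ∈ (0, π/2). If G(N, j, s_N^{(j−1)}, s) ≤ 0, where G(N,j,x,s) := (N−j−2)·sin²(s/2) − sin(x/2)·cos(s/2)^{2(N−j−2)} + sin(s/2), then s is (N,j)-good; that is, for every choice of x₁, …, x_{2(N−j−2)} ∈ I_s, the interval I_s is contained in the set { arccos( F(x₁,…,x_{2(N−j−2)}) + cos(φ)·X(x₁,…,x_{2(N−j−2)}) ) : φ ∈ I_{s_N^{(j−1)}} }. -/

import Mathlib

/-!
Every angle θ ∈ I_s has |cos θ| ≤ sin(s/2) and sin θ ≥ cos(s/2). Hence |F| ≤ r·sin²(s/2) and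
X ≥ cos(s/2)^{2r} with r = N − j − 2, so for y ∈ I_s the hypothesis G ≤ 0 gives
|cos y − F| ≤ sin(s'/2)·X, where s' = s_N^{(j−1)}. Since cos maps I_{s'} onto
[−sin(s'/2), sin(s'/2)], some φ ∈ I_{s'} solves F + cos φ·X = cos y, i.e. α(…, φ) = y.
-/

open Real Finset

/-- I_s = [(π−s)/2, (π+s)/2]. -/
noncomputable def Iset (s : ℝ) : Set ℝ := Set.Icc ((Real.pi - s) / 2) ((Real.pi + s) / 2)

/-- F(x₁,…,x_{2r}) = Σ_{m=1}^{r} cos(a_m)cos(b_m)·∏_{ℓ=1}^{m−1} sin(a_ℓ)sin(b_ℓ),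
where a_m = x_{2m−1}, b_m = x_{2m}. -/
noncomputable def Fangle (a b : ℕ → ℝ) (r : ℕ) : ℝ :=
  ∑ m ∈ Finset.Icc 1 r, Real.cos (a m) * Real.cos (b m) *
    ∏ l ∈ Finset.Icc 1 (m - 1), (Real.sin (a l) * Real.sin (b l))

/-- X(x₁,…,x_{2r}) = ∏_{m=1}^{r} sin(a_m)sin(b_m). -/
noncomputable def Xangle (a b : ℕ → ℝ) (r : ℕ) : ℝ :=
  ∏ m ∈ Finset.Icc 1 r, (Real.sin (a m) * Real.sin (b m))

/-- E(m,s) = m·sin²(s/2) − cos(s/2)^{2m} + sin(s/2). -/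
noncomputable def Efun (m : ℕ) (s : ℝ) : ℝ :=
  (m : ℝ) * Real.sin (s / 2) ^ 2 - Real.cos (s / 2) ^ (2 * m) + Real.sin (s / 2)

/-- G(N,j,x,s) = (N−j−2)·sin²(s/2) − sin(x/2)·cos(s/2)^{2(N−j−2)} + sin(s/2). -/
noncomputable def Gfun (N j : ℕ) (x s : ℝ) : ℝ :=
  ((N - j - 2 : ℕ) : ℝ) * Real.sin (s / 2) ^ 2
    - Real.sin (x / 2) * Real.cos (s / 2) ^ (2 * (N - j - 2)) + Real.sin (s / 2)

/-- The sequence s_N^{(j)}: s_N^{(0)} = inf{s > 0 : E(N−2,s) = 0},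
s_N^{(j)} = inf{s > 0 : G(N,j,s_N^{(j−1)},s) = 0}. -/
noncomputable def sSeq (N : ℕ) : ℕ → ℝ
  | 0 => sInf {s : ℝ | 0 < s ∧ Efun (N - 2) s = 0}
  | j + 1 => sInf {s : ℝ | 0 < s ∧ Gfun N (j + 1) (sSeq N j) s = 0}

/-- s is N-good: for all x₁,…,x_{2(N−2)} ∈ I_s,
I_s ⊆ α_{N−1,N}({x₁}×⋯×{x_{2(N−2)}}×(0,π)). -/
def NGood (N : ℕ) (s : ℝ) : Prop :=
  ∀ a b : ℕ → ℝ, (∀ m ∈ Finset.Icc 1 (N - 2), a m ∈ Iset s ∧ b m ∈ Iset s) →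
    ∀ y ∈ Iset s, ∃ φ ∈ Set.Ioo (0 : ℝ) Real.pi,
      Real.arccos (Fangle a b (N - 2) + Real.cos φ * Xangle a b (N - 2)) = y

/-- s is (N,j)-good: for all x₁,…,x_{2(N−j−2)} ∈ I_s,
I_s ⊆ α_{N−j−1,N−j}({x₁}×⋯×{x_{2(N−j−2)}}×I_{s_N^{(j−1)}}). -/
def NjGood (N j : ℕ) (s : ℝ) : Prop :=
  ∀ a b : ℕ → ℝ, (∀ m ∈ Finset.Icc 1 (N - j - 2), a m ∈ Iset s ∧ b m ∈ Iset s) →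
    ∀ y ∈ Iset s, ∃ φ ∈ Iset (sSeq N (j - 1)),
      Real.arccos (Fangle a b (N - j - 2) + Real.cos φ * Xangle a b (N - j - 2)) = y

lemma sSeq_nonneg (N j : ℕ) : 0 ≤ sSeq N j := by
  cases j <;> exact Real.sInf_nonneg fun _ hx => hx.1.le

lemma cos_pi_sub_div_two (s : ℝ) : cos ((π - s) / 2) = sin (s / 2) := by
  rw [show (π - s) / 2 = π / 2 - s / 2 by ring, cos_pi_div_two_sub]

lemma cos_pi_add_div_two (s : ℝ) : cos ((π + s) / 2) = -sin (s / 2) := by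
  rw [show (π + s) / 2 = s / 2 + π / 2 by ring, cos_add_pi_div_two]

section Iset

variable {s θ : ℝ}

lemma Iset_subset_Icc_zero_pi (hs : s ≤ π) : Iset s ⊆ Set.Icc 0 π :=
  fun _ ⟨h₁, h₂⟩ => ⟨by linarith, by linarith⟩

lemma abs_cos_le_sin_half_of_mem_Iset (hs : s ≤ π) (hθ : θ ∈ Iset s) :
    |cos θ| ≤ sin (s / 2) := by
  obtain ⟨h₁, h₂⟩ := hθ
  refine abs_le.2 ⟨?_, ?_⟩
  · rw [← cos_pi_add_div_two]
    exact cos_le_cos_of_nonneg_of_le_pi (by linarith [pi_pos]) (by linarith) h₂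
  · rw [← cos_pi_sub_div_two]
    exact cos_le_cos_of_nonneg_of_le_pi (by linarith) (by linarith) h₁

lemma cos_half_le_sin_of_mem_Iset (hs : s ≤ π) (hθ : θ ∈ Iset s) :
    cos (s / 2) ≤ sin θ := by
  have h₁ : |π / 2 - θ| ≤ s / 2 := abs_le.2 ⟨by linarith [hθ.2], by linarith [hθ.1]⟩
  calc cos (s / 2) ≤ cos |π / 2 - θ| :=
        cos_le_cos_of_nonneg_of_le_pi (abs_nonneg _)
          (by linarith [pi_pos, abs_nonneg (π / 2 - θ)]) h₁
    _ = sin θ := by rw [cos_abs, cos_pi_div_two_sub]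

lemma exists_mem_Iset_cos_eq (hs : 0 ≤ s) {c : ℝ} (hc : |c| ≤ sin (s / 2)) :
    ∃ φ ∈ Iset s, cos φ = c := by
  refine intermediate_value_Icc' (by linarith) continuous_cos.continuousOn ?_
  rw [cos_pi_sub_div_two, cos_pi_add_div_two]
  exact abs_le.1 hc

end Iset

section Angles

variable {a b : ℕ → ℝ} {r : ℕ}

lemma abs_Fangle_le {t : ℝ}
    (hcos : ∀ m ∈ Icc 1 r, |cos (a m)| ≤ t ∧ |cos (b m)| ≤ t) :
    |Fangle a b r| ≤ r * t ^ 2 := by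
  have hterm : ∀ m ∈ Icc 1 r, |cos (a m) * cos (b m) *
      ∏ l ∈ Icc 1 (m - 1), (sin (a l) * sin (b l))| ≤ t ^ 2 := by
    intro m hm
    have hprod : |∏ l ∈ Icc 1 (m - 1), (sin (a l) * sin (b l))| ≤ 1 := by
      rw [abs_prod]
      refine prod_le_one (fun _ _ => abs_nonneg _) fun l _ => ?_
      rw [abs_mul]
      exact mul_le_one₀ (abs_sin_le_one _) (abs_nonneg _) (abs_sin_le_one _)
    obtain ⟨ha, hb⟩ := hcos m hm
    have ht : 0 ≤ t := (abs_nonneg _).trans ha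
    rw [abs_mul, abs_mul, sq, ← mul_one (t * t)]
    exact mul_le_mul (mul_le_mul ha hb (abs_nonneg _) ht) hprod (abs_nonneg _) (by positivity)
  calc |Fangle a b r| ≤ ∑ m ∈ Icc 1 r, |cos (a m) * cos (b m) *
        ∏ l ∈ Icc 1 (m - 1), (sin (a l) * sin (b l))| := abs_sum_le_sum_abs _ _
    _ ≤ ∑ _m ∈ Icc 1 r, t ^ 2 := sum_le_sum hterm
    _ = r * t ^ 2 := by simp

lemma pow_le_Xangle {C : ℝ} (hC : 0 ≤ C)
    (hsin : ∀ m ∈ Icc 1 r, C ≤ sin (a m) ∧ C ≤ sin (b m)) :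
    C ^ (2 * r) ≤ Xangle a b r := by
  calc C ^ (2 * r) = ∏ _m ∈ Icc 1 r, C * C := by simp [pow_mul, sq]
    _ ≤ Xangle a b r :=
        prod_le_prod (fun _ _ => by positivity) fun m hm =>
          mul_le_mul (hsin m hm).1 (hsin m hm).2 hC (hC.trans (hsin m hm).1)

lemma exists_mem_Iset_arccos_eq {s' y : ℝ} (hs' : 0 ≤ s') (hy : y ∈ Set.Icc 0 π)
    (hX : 0 < Xangle a b r)
    (hcos : |cos y - Fangle a b r| ≤ sin (s' / 2) * Xangle a b r) :
    ∃ φ ∈ Iset s', arccos (Fangle a b r + cos φ * Xangle a b r) = y := by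
  obtain ⟨φ, hφ, hcosφ⟩ := exists_mem_Iset_cos_eq hs'
    (c := (cos y - Fangle a b r) / Xangle a b r)
    (by rwa [abs_div, abs_of_pos hX, div_le_iff₀ hX])
  refine ⟨φ, hφ, ?_⟩
  rw [hcosφ, div_mul_cancel₀ _ hX.ne', add_sub_cancel, arccos_cos hy.1 hy.2]

end Angles

theorem Gfun_nonpos_imp_NjGood_general (N j : ℕ)
    (s : ℝ) (hs : s ∈ Set.Ioo (0 : ℝ) (Real.pi / 2))
    (hG : Gfun N j (sSeq N (j - 1)) s ≤ 0) :
    NjGood N j s := by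
  obtain ⟨hs0, hs_lt⟩ := hs
  intro a b hab y hy
  have hsπ : s ≤ π := by linarith [pi_pos]
  set r := N - j - 2
  set s' := sSeq N (j - 1)
  have hG' : (r : ℝ) * sin (s / 2) ^ 2 + sin (s / 2) ≤ sin (s' / 2) * cos (s / 2) ^ (2 * r) := by
    unfold Gfun at hG; linarith
  have ht : 0 < sin (s / 2) := sin_pos_of_pos_of_lt_pi (by linarith) (by linarith)
  have hC : 0 < cos (s / 2) := cos_pos_of_mem_Ioo ⟨by linarith [pi_pos], by linarith⟩
  have hF := abs_Fangle_le fun m hm =>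
    ⟨abs_cos_le_sin_half_of_mem_Iset hsπ (hab m hm).1,
      abs_cos_le_sin_half_of_mem_Iset hsπ (hab m hm).2⟩
  have hX := pow_le_Xangle hC.le fun m hm =>
    ⟨cos_half_le_sin_of_mem_Iset hsπ (hab m hm).1, cos_half_le_sin_of_mem_Iset hsπ (hab m hm).2⟩
  have hu : 0 ≤ sin (s' / 2) := by
    have : 0 < sin (s' / 2) * cos (s / 2) ^ (2 * r) :=
      (add_pos_of_nonneg_of_pos (by positivity) ht).trans_le hG'
    exact (pos_of_mul_pos_left this (pow_pos hC _).le).le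
  refine exists_mem_Iset_arccos_eq (sSeq_nonneg N (j - 1))
    (Iset_subset_Icc_zero_pi hsπ hy) ((pow_pos hC _).trans_le hX) ?_
  calc |cos y - Fangle a b r| ≤ |cos y| + |Fangle a b r| := abs_sub _ _
    _ ≤ sin (s / 2) + r * sin (s / 2) ^ 2 :=
        add_le_add (abs_cos_le_sin_half_of_mem_Iset hsπ hy) hF
    _ ≤ sin (s' / 2) * cos (s / 2) ^ (2 * r) := by linarith
    _ ≤ sin (s' / 2) * Xangle a b r := mul_le_mul_of_nonneg_left hX hu

/-- if G(N,j,s_N^{(j−1)},s) ≤ 0 then s is (N,j)-good. -/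
theorem Gfun_nonpos_imp_NjGood (N j : ℕ) (hN : 4 ≤ N) (hj1 : 1 ≤ j) (hj2 : j ≤ N - 3)
    (s : ℝ) (hs : s ∈ Set.Ioo (0 : ℝ) (Real.pi / 2))
    (hG : Gfun N j (sSeq N (j - 1)) s ≤ 0) :
    NjGood N j s :=
  Gfun_nonpos_imp_NjGood_general N j s hs hG
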